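/- Let l ≥ 1 and let a, b > 0. Then (a + tb)^{-1/l} ≤ a^{-1/l} - (t/(2l)) b a^{-(l+1)/l} for all sufficiently small t > 0. Applied with a = σ_l(y), b = σ_{l-1}(y), this shows that the curvature quotient f_{n,k} satisfies f_{n,k}(x₁,…,x_{n-1}, s) ≤ f_∞(x₁,…,x_{n-1}) - C s⁻¹ for all sufficiently large s, uniformly for x in a compact subset of Γ^{n-1}, where f_∞ is the limit as the last variable tends to infinity. -/

import Mathlib

/-- The `k`-th elementary symmetric polynomial in `n` real variables. -/
def esymm (n k : ℕ) (x : Fin n → ℝ) : ℝ :=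
  ∑ s ∈ Finset.univ.powersetCard k, ∏ i ∈ s, x i

/-- The curvature quotient `f_{m,k} = c_{m,k} (σ_m/σ_k)^{1/(m-k)}`,
with `c_{m,k} = C(m,k)^{1/(m-k)}`. -/
noncomputable def fnk (m k : ℕ) (x : Fin m → ℝ) : ℝ :=
  (m.choose k : ℝ) ^ ((1 : ℝ) / ((m : ℝ) - (k : ℝ))) *
    (esymm m m x / esymm m k x) ^ ((1 : ℝ) / ((m : ℝ) - (k : ℝ)))

/-- The limit `f_∞` of the curvature quotient `f_{n+1,k}` as the last variable tends to
infinity: `f_∞(x) = c_{n+1,k} σ_l(x₁⁻¹,…,x_n⁻¹)^{-1/l}` with `l = n+1-k`. -/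
noncomputable def finf (n k : ℕ) (x : Fin n → ℝ) : ℝ :=
  ((n + 1).choose k : ℝ) ^ ((1 : ℝ) / ((n : ℝ) + 1 - (k : ℝ))) *
    (esymm n (n + 1 - k) (fun i => (x i)⁻¹)) ^ (-((1 : ℝ) / ((n : ℝ) + 1 - (k : ℝ))))

/-! ### Auxiliary lemmas -/

lemma key_ineq (l : ℕ) (hl : 1 ≤ l) (a b t : ℝ) (ha : 0 < a) (hb : 0 < b)
    (ht : 0 < t) (htu : t * b ≤ a) :
    (a + t * b) ^ (-((1 : ℝ) / (l : ℝ))) ≤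
      a ^ (-((1 : ℝ) / (l : ℝ))) -
        (t / (2 * (l : ℝ))) * b * a ^ (-(((l : ℝ) + 1) / (l : ℝ))) := by
  have hl0 : (0 : ℝ) < (l : ℝ) := by exact_mod_cast hl
  set u : ℝ := t * b / a with hu_def
  have hu0 : 0 < u := by positivity
  have hu1 : u ≤ 1 := by rw [hu_def, div_le_one ha]; linarith
  have hc0 : (0 : ℝ) < 1 - u / (2 * l) := by
    have hl1 : (1:ℝ) ≤ (l:ℝ) := by exact_mod_cast hl
    have : u / (2 * l) ≤ 1 / 2 := by
      rw [div_le_div_iff₀ (by positivity) (by norm_num)]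
      nlinarith
    linarith
  -- Bernoulli: (1 - u/(2l))^l ≥ 1 - u/2
  have hbern : 1 - u / 2 ≤ (1 - u / (2 * l)) ^ l := by
    have h := one_add_mul_le_pow (a := -(u / (2 * l))) (by nlinarith) l
    have : 1 + (l : ℝ) * -(u / (2 * l)) = 1 - u / 2 := by
      field_simp
      ring
    rw [this] at h
    calc 1 - u / 2 ≤ (1 + -(u / (2*l))) ^ l := h
      _ = (1 - u / (2*l)) ^ l := by ring_nf
  have hkey : (1 + u)⁻¹ ≤ (1 - u / (2 * l)) ^ l := by
    have h2 : (1 + u)⁻¹ ≤ 1 - u / 2 := by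
      rw [inv_le_iff_one_le_mul₀ (by linarith)]
      nlinarith
    linarith
  -- take l-th roots
  have hroot : (1 + u) ^ (-((1:ℝ)/(l:ℝ))) ≤ 1 - u / (2 * l) := by
    have h1 : ((1 + u)⁻¹) ^ ((1:ℝ)/(l:ℝ)) ≤ ((1 - u / (2*l)) ^ l) ^ ((1:ℝ)/(l:ℝ)) :=
      Real.rpow_le_rpow (by positivity) hkey (by positivity)
    have h2 : ((1 - u / (2*l)) ^ l : ℝ) ^ ((1:ℝ)/(l:ℝ)) = 1 - u / (2*l) := by
      rw [← Real.rpow_natCast (1 - u/(2*l)) l, ← Real.rpow_mul hc0.le]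
      rw [mul_one_div, div_self hl0.ne', Real.rpow_one]
    have h3 : ((1 + u)⁻¹) ^ ((1:ℝ)/(l:ℝ)) = (1 + u) ^ (-((1:ℝ)/(l:ℝ))) := by
      rw [Real.inv_rpow (by linarith), ← Real.rpow_neg (by linarith)]
    rw [h3, h2] at h1
    exact h1
  have hsplit : a + t * b = a * (1 + u) := by
    rw [hu_def]
    field_simp
  have hmul : (a + t * b) ^ (-((1:ℝ)/(l:ℝ))) ≤
      a ^ (-((1:ℝ)/(l:ℝ))) * (1 - u / (2 * l)) := by
    rw [hsplit, Real.mul_rpow ha.le (by linarith)]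
    exact mul_le_mul_of_nonneg_left hroot (by positivity)
  refine hmul.trans (le_of_eq ?_)
  have hpow : a ^ (-(((l:ℝ)+1)/(l:ℝ))) = a ^ (-((1:ℝ)/(l:ℝ))) * a⁻¹ := by
    rw [← Real.rpow_neg_one a, ← Real.rpow_add ha]
    congr 1
    field_simp
    ring
  rw [hpow, hu_def]
  field_simp

lemma esymm_eq_multiset (n k : ℕ) (x : Fin n → ℝ) :
    esymm n k x = ((Finset.univ.val.map x).esymm k) := by
  rw [Finset.esymm_map_val]
  rfl

lemma multiset_esymm_cons (c : ℝ) (m : Multiset ℝ) (k : ℕ) :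
    (c ::ₘ m).esymm (k + 1) = m.esymm (k + 1) + c * m.esymm k := by
  unfold Multiset.esymm
  rw [Multiset.powersetCard_cons, Multiset.map_add, Multiset.sum_add, Multiset.map_map]
  congr 1
  rw [show ((Multiset.prod ∘ Multiset.cons c) = fun t : Multiset ℝ => c * t.prod) from
    funext fun t => by simp [Multiset.prod_cons]]
  exact Multiset.sum_map_mul_left (s := Multiset.powersetCard k m) (f := Multiset.prod)
    (a := c)

lemma univ_val_snoc (n : ℕ) (x : Fin n → ℝ) (s : ℝ) :
    (Finset.univ.val.map (Fin.snoc x s : Fin (n+1) → ℝ)) =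
      s ::ₘ (Finset.univ.val.map x) := by
  have huniv : (Finset.univ : Finset (Fin (n+1))) =
      insert (Fin.last n) (Finset.univ.map Fin.castSuccEmb) := by
    ext i
    simp only [Finset.mem_univ, Finset.mem_insert, Finset.mem_map, true_iff]
    rcases (Fin.le_last i).lt_or_eq with h | h
    · exact Or.inr ⟨i.castPred h.ne, trivial, by simp [Fin.castSuccEmb, Fin.ext_iff]⟩
    · exact Or.inl h
  rw [huniv, Finset.insert_val_of_notMem
    (by simp [Fin.castSuccEmb]; intro i; exact (Fin.castSucc_lt_last i).ne)]
  rw [Multiset.map_cons, Fin.snoc_last]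
  congr 1
  rw [Finset.map_val, Multiset.map_map]
  congr 1
  funext i
  have : Fin.castSuccEmb i = Fin.castSucc i := rfl
  simp only [Function.comp_apply, this, Fin.snoc_castSucc]

lemma esymm_snoc (n k : ℕ) (x : Fin n → ℝ) (s : ℝ) :
    esymm (n+1) (k+1) (Fin.snoc x s) = esymm n (k+1) x + s * esymm n k x := by
  rw [esymm_eq_multiset, esymm_eq_multiset, esymm_eq_multiset, univ_val_snoc,
    multiset_esymm_cons]

lemma esymm_self (n : ℕ) (x : Fin n → ℝ) : esymm n n x = ∏ i, x i := by
  unfold esymm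
  have h : (Finset.univ : Finset (Fin n)).card = n := by simp
  have h2 := Finset.powersetCard_self (Finset.univ : Finset (Fin n))
  rw [h] at h2
  rw [h2, Finset.sum_singleton]

lemma esymm_of_gt (n k : ℕ) (h : n < k) (x : Fin n → ℝ) : esymm n k x = 0 := by
  unfold esymm
  rw [Finset.powersetCard_eq_empty.mpr (by simpa using h), Finset.sum_empty]

lemma esymm_pos (n k : ℕ) (hk : k ≤ n) (x : Fin n → ℝ) (hx : ∀ i, 0 < x i) :
    0 < esymm n k x := by
  apply Finset.sum_pos
  · intro t _
    exact Finset.prod_pos fun i _ => hx i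
  · exact Finset.powersetCard_nonempty.mpr (by simpa using hk)

lemma esymm_inv (n l : ℕ) (hl : l ≤ n) (x : Fin n → ℝ) (hx : ∀ i, 0 < x i) :
    esymm n l (fun i => (x i)⁻¹) = esymm n (n - l) x / ∏ i, x i := by
  have hP : (0:ℝ) < ∏ i, x i := Finset.prod_pos fun i _ => hx i
  unfold esymm
  rw [Finset.sum_div]
  apply Finset.sum_nbij' (fun t => tᶜ) (fun t => tᶜ)
  · intro t ht
    simp only [Finset.mem_powersetCard_univ] at ht ⊢
    rw [Finset.card_compl, ht]
    simp
  · intro t ht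
    simp only [Finset.mem_powersetCard_univ] at ht ⊢
    rw [Finset.card_compl, ht]
    simp
    omega
  · intro t _; simp
  · intro t _; simp
  · intro t ht
    have h1 : (∏ i ∈ t, x i) * ∏ i ∈ tᶜ, x i = ∏ i, x i := Finset.prod_mul_prod_compl t x
    have h2 : (0:ℝ) < ∏ i ∈ t, x i := Finset.prod_pos fun i _ => hx i
    show (∏ i ∈ t, (x i)⁻¹) = (∏ i ∈ tᶜ, x i) / ∏ i, x i
    rw [Finset.prod_inv_distrib]
    rw [eq_div_iff hP.ne', ← h1]
    field_simp

lemma esymm_continuous (n j : ℕ) : Continuous fun x : Fin n → ℝ => esymm n j x := by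
  unfold esymm
  exact continuous_finset_sum _ fun t _ =>
    continuous_finset_prod _ fun i _ => continuous_apply i

/-- The coefficient appearing in the `O(1/s)` term. -/
noncomputable def Cfun (n m : ℕ) (x : Fin n → ℝ) : ℝ :=
  ((n+1).choose (m+1) : ℝ) ^ ((1:ℝ)/((n - m : ℕ):ℝ)) *
    (∏ i, x i) ^ ((1:ℝ)/((n - m : ℕ):ℝ)) * esymm n (m+1) x *
    (esymm n m x) ^ (-((((n - m : ℕ):ℝ)+1)/((n - m : ℕ):ℝ))) / (2*((n - m : ℕ):ℝ))

lemma Cfun_pos (n m : ℕ) (hmn : m + 1 ≤ n) (x : Fin n → ℝ) (hx : ∀ i, 0 < x i) :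
    0 < Cfun n m x := by
  have hc : (0:ℝ) < ((n+1).choose (m+1) : ℝ) := by
    exact_mod_cast Nat.choose_pos (by omega)
  have ha : 0 < esymm n m x := esymm_pos n m (by omega) x hx
  have hb : 0 < esymm n (m+1) x := esymm_pos n (m+1) (by omega) x hx
  have hp : (0:ℝ) < ∏ i, x i := Finset.prod_pos fun i _ => hx i
  have hl : (0:ℝ) < ((n - m : ℕ):ℝ) := by
    have : 1 ≤ n - m := by omega
    exact_mod_cast this.trans_lt' (by norm_num)
  rw [Cfun]
  have h1 := Real.rpow_pos_of_pos hc ((1:ℝ)/((n - m : ℕ):ℝ))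
  have h2 := Real.rpow_pos_of_pos hp ((1:ℝ)/((n - m : ℕ):ℝ))
  have h3 := Real.rpow_pos_of_pos ha (-((((n - m : ℕ):ℝ)+1)/((n - m : ℕ):ℝ)))
  positivity

lemma main_est (n m : ℕ) (hmn : m + 1 ≤ n) (x : Fin n → ℝ) (hx : ∀ i, 0 < x i)
    (s : ℝ) (hs : 0 < s) (hst : esymm n (m+1) x / esymm n m x < s) :
    fnk (n+1) (m+1) (Fin.snoc x s) ≤ finf n (m+1) x - Cfun n m x / s := by
  set l : ℕ := n - m with hl_def
  have hl : 1 ≤ l := by omega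
  have hlcast : ((l : ℕ) : ℝ) = (n : ℝ) - (m : ℝ) := by
    rw [hl_def]; push_cast [Nat.cast_sub (by omega : m ≤ n)]; ring
  have hl0 : (0:ℝ) < (l:ℝ) := by exact_mod_cast hl
  set a : ℝ := esymm n m x with ha_def
  set b : ℝ := esymm n (m+1) x with hb_def
  have ha : 0 < a := esymm_pos n m (by omega) x hx
  have hb : 0 < b := esymm_pos n (m+1) (by omega) x hx
  have hp : (0:ℝ) < ∏ i, x i := Finset.prod_pos fun i _ => hx i
  set p : ℝ := ∏ i, x i with hp_def
  have hc : (0:ℝ) < ((n+1).choose (m+1) : ℝ) := by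
    exact_mod_cast Nat.choose_pos (by omega)
  set c : ℝ := ((n+1).choose (m+1) : ℝ) with hc_def
  set r : ℝ := (1:ℝ)/(l:ℝ) with hr_def
  have htop : esymm (n+1) (n+1) (Fin.snoc x s) = s * p := by
    rw [esymm_snoc, esymm_of_gt n (n+1) (by omega), esymm_self]; ring
  have hmid : esymm (n+1) (m+1) (Fin.snoc x s) = b + s * a := by
    rw [esymm_snoc]
  have hexp : (1:ℝ) / (((n+1:ℕ):ℝ) - ((m+1:ℕ):ℝ)) = r := by
    rw [hr_def, hlcast]; push_cast; ring_nf
  have hdenom : (0:ℝ) < b + s * a := by positivity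
  have hdenom2 : (0:ℝ) < a + (1/s) * b := by positivity
  have hratio : s * p / (b + s * a) = p / (a + (1/s) * b) := by
    field_simp
    ring
  have hfnk : fnk (n+1) (m+1) (Fin.snoc x s) =
      c ^ r * (p ^ r * (a + (1/s) * b) ^ (-r)) := by
    rw [fnk, htop, hmid, hexp, hratio, Real.div_rpow hp.le hdenom2.le,
      Real.rpow_neg hdenom2.le, div_eq_mul_inv]
  have hfinf : finf n (m+1) x = c ^ r * (p ^ r * a ^ (-r)) := by
    rw [finf]
    have h1 : n + 1 - (m+1) = l := by omega
    have h2 : ((n:ℝ) + 1 - ((m+1:ℕ):ℝ)) = (l:ℝ) := by rw [hlcast]; push_cast; ring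
    rw [h1, h2, esymm_inv n l (by omega) x hx]
    have h3 : n - l = m := by omega
    rw [h3, ← ha_def, ← hp_def, ← hc_def, ← hr_def]
    rw [Real.rpow_neg (by positivity), Real.div_rpow ha.le hp.le]
    rw [Real.rpow_neg ha.le]
    field_simp
  have hkey := key_ineq l hl a b (1/s) ha hb (by positivity)
    (by rw [div_lt_iff₀ ha] at hst; rw [div_mul_eq_mul_div, div_le_iff₀ hs]; nlinarith)
  have hfac : (0:ℝ) ≤ c ^ r * p ^ r := by positivity
  have := mul_le_mul_of_nonneg_left hkey hfac
  calc fnk (n+1) (m+1) (Fin.snoc x s)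
      = c ^ r * p ^ r * (a + (1/s) * b) ^ (-r) := by rw [hfnk]; ring
    _ ≤ c ^ r * p ^ r * (a ^ (-r) - (1/s/(2*(l:ℝ))) * b * a ^ (-(((l:ℝ)+1)/(l:ℝ)))) := this
    _ = finf n (m+1) x - Cfun n m x / s := by
        rw [hfinf, Cfun, ← hc_def, ← hp_def, ← hb_def, ← ha_def, ← hl_def, ← hr_def]
        field_simp

/-- For `l ≥ 1` and `a, b > 0` one has `(a + tb)^{-1/l} ≤ a^{-1/l} - (t/(2l)) b a^{-(l+1)/l}`
for all sufficiently small `t > 0`.  Applied with `a = σ_l(y)`, `b = σ_{l-1}(y)`, this shows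
that the curvature quotient `f_{n+1,k}` satisfies
`f_{n+1,k}(x₁,…,x_n, s) ≤ f_∞(x₁,…,x_n) - C s⁻¹` for all sufficiently large `s`, uniformly
for `x` in a compact subset of the open positive cone. -/
theorem fnk_regular_at_infinity (n k : ℕ) (hk1 : 1 ≤ k) (hkn : k ≤ n) :
    (∀ l : ℕ, 1 ≤ l → ∀ a b : ℝ, 0 < a → 0 < b →
      ∃ t₀ > (0 : ℝ), ∀ t : ℝ, 0 < t → t < t₀ →
        (a + t * b) ^ (-((1 : ℝ) / (l : ℝ))) ≤
          a ^ (-((1 : ℝ) / (l : ℝ))) -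
            (t / (2 * (l : ℝ))) * b * a ^ (-(((l : ℝ) + 1) / (l : ℝ)))) ∧
    (∀ X : Set (Fin n → ℝ), IsCompact X → (∀ x ∈ X, ∀ i, 0 < x i) →
      ∃ C > (0 : ℝ), ∃ T > (0 : ℝ), ∀ x ∈ X, ∀ s : ℝ, T ≤ s →
        fnk (n + 1) k (Fin.snoc x s) ≤ finf n k x - C / s) := by
  constructor
  · intro l hl a b ha hb
    refine ⟨a / b, by positivity, fun t ht htlt => ?_⟩
    exact key_ineq l hl a b t ha hb ht (by rw [lt_div_iff₀ hb] at htlt; linarith)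
  · intro X hX hXpos
    obtain ⟨m, rfl⟩ : ∃ m, k = m + 1 := ⟨k - 1, by omega⟩
    have hmn : m + 1 ≤ n := hkn
    rcases X.eq_empty_or_nonempty with rfl | hne
    · exact ⟨1, one_pos, 1, one_pos, fun x hx => absurd hx (by simp)⟩
    -- continuity of Cfun and of the threshold function on X
    have hContA := esymm_continuous n m
    have hContB := esymm_continuous n (m+1)
    have hContP : Continuous fun x : Fin n → ℝ => ∏ i, x i :=
      continuous_finset_prod _ fun i _ => continuous_apply i
    have hAne : ∀ x ∈ X, esymm n m x ≠ 0 :=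
      fun x hx => (esymm_pos n m (by omega) x (hXpos x hx)).ne'
    have hContC : ContinuousOn (Cfun n m) X := by
      apply ContinuousOn.div_const
      apply ContinuousOn.mul
      · apply ContinuousOn.mul
        · apply ContinuousOn.mul continuousOn_const
          exact hContP.continuousOn.rpow_const fun x hx => Or.inr (by positivity)
        · exact hContB.continuousOn
      · exact hContA.continuousOn.rpow_const fun x hx => Or.inl (hAne x hx)
    have hContT : ContinuousOn (fun x => esymm n (m+1) x / esymm n m x) X :=
      hContB.continuousOn.div hContA.continuousOn hAne
    obtain ⟨x₀, hx₀X, hx₀min⟩ := hX.exists_isMinOn hne hContC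
    obtain ⟨x₁, hx₁X, hx₁max⟩ := hX.exists_isMaxOn hne hContT
    have hT1pos : 0 < esymm n (m+1) x₁ / esymm n m x₁ :=
      div_pos (esymm_pos n (m+1) (by omega) x₁ (hXpos x₁ hx₁X))
        (esymm_pos n m (by omega) x₁ (hXpos x₁ hx₁X))
    refine ⟨Cfun n m x₀, Cfun_pos n m hmn x₀ (hXpos x₀ hx₀X),
      esymm n (m+1) x₁ / esymm n m x₁ + 1, by positivity, fun x hx s hTs => ?_⟩
    have hs : 0 < s := lt_of_lt_of_le (by positivity) hTs
    have hst : esymm n (m+1) x / esymm n m x < s :=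
      lt_of_le_of_lt (hx₁max hx) (by linarith)
    refine (main_est n m hmn x (hXpos x hx) s hs hst).trans ?_
    have : Cfun n m x₀ / s ≤ Cfun n m x / s := by
      gcongr
      exact hx₀min hx
    linarith
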